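/- Let t¹ < t² < t³, and let ν₁ be a Borel probability on C([t¹,t²];𝕋^d) × U and ν₂ a Borel probability on C([t²,t³];𝕋^d) × U such that the pushforwards of ν₁ and ν₂ under (x(·),u) ↦ (x(t²),u) coincide (call it μ). Define the concatenation ν₁⊙ν₂ on C([t¹,t³];𝕋^d) × U via ∫φ d(ν₁⊙ν₂) = ∫∫ φ(a₁⊙a₂) ν₂(da₂ | x₁(t²),u₁) ν₁(da₁), using the disintegration of ν₂ over μ, where a₁⊙a₂ pastes the two trajectories. Then ν₁⊙ν₂ is a well-defined Borel probability, and its pushforward under (x(·),u) ↦ (x(t),u) equals that of ν₁ for t ∈ [t¹,t²] and that of ν₂ for t ∈ [t²,t³]. -/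

import Mathlib

noncomputable def intLattice (d : ℕ) : AddSubgroup (EuclideanSpace ℝ (Fin d)) where
  carrier := {v | ∀ i, ∃ n : ℤ, v i = (n : ℝ)}
  zero_mem' := fun i => ⟨0, by simp⟩
  add_mem' := by
    intro a b ha hb i
    obtain ⟨n, hn⟩ := ha i
    obtain ⟨m, hm⟩ := hb i
    exact ⟨n + m, by simp [hn, hm]⟩
  neg_mem' := by
    intro a ha i
    obtain ⟨n, hn⟩ := ha i
    exact ⟨-n, by simp [hn]⟩

instance intLattice_isClosed (d : ℕ) :
    IsClosed ((intLattice d : Set (EuclideanSpace ℝ (Fin d)))) := by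
  have h : (intLattice d : Set (EuclideanSpace ℝ (Fin d))) =
      ⋂ i, (fun v : EuclideanSpace ℝ (Fin d) => v i) ⁻¹' (Set.range ((↑) : ℤ → ℝ)) := by
    ext v
    simp only [Set.mem_iInter, Set.mem_preimage, Set.mem_range]
    constructor
    · intro hv i; obtain ⟨n, hn⟩ := hv i; exact ⟨n, hn.symm⟩
    · intro hv i; obtain ⟨n, hn⟩ := hv i; exact ⟨n, hn.symm⟩
  rw [h]
  exact isClosed_iInter fun i =>
    (Int.isClosedEmbedding_coe_real.isClosed_range).preimage
      ((continuous_apply i).comp (PiLp.continuous_ofLp (p := 2) (β := fun _ : Fin d => ℝ)))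

/-- The `d`-dimensional torus `𝕋^d = ℝ^d/ℤ^d`, with the quotient (flat) metric. -/
abbrev Torus (d : ℕ) := EuclideanSpace ℝ (Fin d) ⧸ intLattice d

noncomputable instance (d : ℕ) : MeasurableSpace (Torus d) := borel _
instance (d : ℕ) : BorelSpace (Torus d) := ⟨rfl⟩

open MeasureTheory

noncomputable instance (d : ℕ) (a b : ℝ) :
    MeasurableSpace C(Set.Icc a b, Torus d) := borel _
instance (d : ℕ) (a b : ℝ) : BorelSpace C(Set.Icc a b, Torus d) := ⟨rfl⟩

/-- Restriction of a continuous path along an inclusion of intervals. -/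
def restrMap {T : Type*} [TopologicalSpace T] {a b a' b' : ℝ}
    (h : Set.Icc a b ⊆ Set.Icc a' b') (f : C(Set.Icc a' b', T)) : C(Set.Icc a b, T) :=
  f.comp ⟨Set.inclusion h, continuous_inclusion h⟩

/-!
Disintegrate `ν₂` along `(x(t²), u)` and feed the resulting kernel the value `(x₁(t²), u₁)` of
a sample of `ν₁`; thanks to the matching condition this is a coupling of `ν₁` and `ν₂` carried by
the pairs of trajectories that agree at `t²` and have the same control. Concatenating the paths
pushes it forward to `ν₁ ⊙ ν₂`, whose restrictions to `[t¹, t²]` and `[t², t³]` are then `ν₁`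
and `ν₂`, and the marginals at fixed times follow.
-/

open MeasureTheory ProbabilityTheory Set

section Concat

variable {T : Type*} [TopologicalSpace T] [AddCommGroup T] [IsTopologicalAddGroup T]
  {a b c : ℝ} (hab : a ≤ b) (hbc : b ≤ c)

/-- Off the matching set `x₁ b = x₂ b` this is not a concatenation, but writing it as a sum of
clamped paths makes it jointly continuous in `(x₁, x₂)`. -/
noncomputable def concatPath (x₁ : C(Icc a b, T)) (x₂ : C(Icc b c, T)) : C(Icc a c, T) :=
  x₁.comp ⟨projIcc a b hab ∘ Subtype.val, continuous_projIcc.comp continuous_subtype_val⟩ +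
    x₂.comp ⟨projIcc b c hbc ∘ Subtype.val, continuous_projIcc.comp continuous_subtype_val⟩ -
    ContinuousMap.const _ (x₂ ⟨b, left_mem_Icc.2 hbc⟩)

theorem continuous_concatPath :
    Continuous fun x : C(Icc a b, T) × C(Icc b c, T) => concatPath hab hbc x.1 x.2 :=
  (((ContinuousMap.continuous_precomp _).comp continuous_fst).add
    ((ContinuousMap.continuous_precomp _).comp continuous_snd)).sub
    (ContinuousMap.continuous_const'.comp ((continuous_eval_const _).comp continuous_snd))

theorem restrMap_concatPath_left (x₁ : C(Icc a b, T)) (x₂ : C(Icc b c, T)) :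
    restrMap (Icc_subset_Icc le_rfl hbc) (concatPath hab hbc x₁ x₂) = x₁ := by
  ext t
  have hx₂ : projIcc b c hbc t = ⟨b, left_mem_Icc.2 hbc⟩ := projIcc_of_le_left hbc t.2.2
  simp [restrMap, concatPath, hx₂]

theorem restrMap_concatPath_right (x₁ : C(Icc a b, T)) (x₂ : C(Icc b c, T))
    (h : x₁ ⟨b, right_mem_Icc.2 hab⟩ = x₂ ⟨b, left_mem_Icc.2 hbc⟩) :
    restrMap (Icc_subset_Icc hab le_rfl) (concatPath hab hbc x₁ x₂) = x₂ := by
  ext t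
  have hx₁ : projIcc a b hab t = ⟨b, right_mem_Icc.2 hab⟩ := projIcc_of_right_le hab t.2.1
  simp [restrMap, concatPath, hx₁, h]

end Concat

theorem MeasureTheory.Measure.map_prodMap_compProd_comap {α β Z : Type*} [MeasurableSpace α]
    [MeasurableSpace β] [MeasurableSpace Z] {f : α → Z} (hf : Measurable f) (μ : Measure α)
    [SFinite μ] (κ : Kernel Z β) [IsSFiniteKernel κ] :
    (μ ⊗ₘ κ.comap f hf).map (Prod.map f id) = μ.map f ⊗ₘ κ := by
  ext s hs
  rw [Measure.map_apply (hf.prodMap measurable_id) hs,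
    Measure.compProd_apply (hf.prodMap measurable_id hs), Measure.compProd_apply hs,
    lintegral_map (Kernel.measurable_kernel_prodMk_left hs) hf]
  rfl

/-- The gluing lemma for couplings: disintegrate `ν₂` along `e₂` and feed the resulting kernel
the value `e₁ x`. -/
theorem exists_coupling_of_map_eq {α β Z : Type*} [MeasurableSpace α] [MeasurableSpace β]
    [StandardBorelSpace β] [MeasurableSpace Z] [MeasurableEq Z] {e₁ : α → Z} {e₂ : β → Z}
    (he₁ : Measurable e₁) (he₂ : Measurable e₂) (ν₁ : Measure α) [IsProbabilityMeasure ν₁]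
    (ν₂ : Measure β) [IsProbabilityMeasure ν₂] (h : ν₁.map e₁ = ν₂.map e₂) :
    ∃ γ : Measure (α × β), IsProbabilityMeasure γ ∧ γ.map Prod.fst = ν₁ ∧
      γ.map Prod.snd = ν₂ ∧ ∀ᵐ q ∂γ, e₁ q.1 = e₂ q.2 := by
  have := nonempty_of_isProbabilityMeasure ν₂
  set κ := condDistrib id e₂ ν₂
  have hpush : (ν₁ ⊗ₘ κ.comap e₁ he₁).map (Prod.map e₁ id) = ν₂.map fun y => (e₂ y, y) := by
    rw [Measure.map_prodMap_compProd_comap, h, compProd_map_condDistrib aemeasurable_id]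
    rfl
  have hgraph : Measurable fun y => (e₂ y, y) := he₂.prodMk measurable_id
  refine ⟨ν₁ ⊗ₘ κ.comap e₁ he₁, inferInstance, Measure.fst_compProd _ _, ?_, ?_⟩
  · calc (ν₁ ⊗ₘ κ.comap e₁ he₁).map Prod.snd
        = ((ν₁ ⊗ₘ κ.comap e₁ he₁).map (Prod.map e₁ id)).map Prod.snd := by
          rw [Measure.map_map measurable_snd (he₁.prodMap measurable_id)]; rfl
      _ = ν₂ := by rw [hpush, ← Measure.snd, Measure.snd_map_prodMk he₂, Measure.map_id']
  · have hdiag : MeasurableSet {p : Z × β | p.1 ≠ e₂ p.2} :=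
      (measurableSet_eq_fun measurable_fst (he₂.comp measurable_snd)).compl
    refine ae_iff.2 ?_
    change (ν₁ ⊗ₘ κ.comap e₁ he₁) (Prod.map e₁ id ⁻¹' {p : Z × β | p.1 ≠ e₂ p.2}) = 0
    rw [← Measure.map_apply (he₁.prodMap measurable_id) hdiag, hpush,
      Measure.map_apply hgraph hdiag]
    simp

instance ContinuousMap.polishSpace {X Y : Type*} [MetricSpace X] [CompactSpace X]
    [MetricSpace Y] [CompleteSpace Y] [SecondCountableTopology Y] : PolishSpace C(X, Y) where
  toIsCompletelyMetrizableSpace :=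
    @TopologicalSpace.IsCompletelyMetrizableSpace.of_completeSpace_metrizable _
      ContinuousMap.compactConvergenceUniformSpace _ _ _

theorem measurable_eval_prodMk {d : ℕ} {U : Type*} [MeasurableSpace U] {a b : ℝ} (t : Icc a b) :
    Measurable fun p : C(Icc a b, Torus d) × U => (p.1 t, p.2) :=
  (continuous_eval_const t).measurable.prodMap measurable_id

theorem measurable_restrMap_prodMk {d : ℕ} {U : Type*} [MeasurableSpace U] {a b a' b' : ℝ}
    (h : Icc a b ⊆ Icc a' b') :
    Measurable fun p : C(Icc a' b', Torus d) × U => (restrMap h p.1, p.2) :=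
  (ContinuousMap.continuous_precomp _).measurable.prodMap measurable_id

theorem exists_concat_measure {d : ℕ} {U : Type*} [MeasurableSpace U] [StandardBorelSpace U]
    {t1 t2 t3 : ℝ} (h12 : t1 ≤ t2) (h23 : t2 ≤ t3)
    (ν₁ : Measure (C(Icc t1 t2, Torus d) × U)) [IsProbabilityMeasure ν₁]
    (ν₂ : Measure (C(Icc t2 t3, Torus d) × U)) [IsProbabilityMeasure ν₂]
    (hmatch : ν₁.map (fun p => (p.1 ⟨t2, right_mem_Icc.2 h12⟩, p.2)) =
      ν₂.map (fun p => (p.1 ⟨t2, left_mem_Icc.2 h23⟩, p.2))) :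
    ∃ ν : Measure (C(Icc t1 t3, Torus d) × U), IsProbabilityMeasure ν ∧
      ν.map (fun p => (restrMap (Icc_subset_Icc le_rfl h23) p.1, p.2)) = ν₁ ∧
      ν.map (fun p => (restrMap (Icc_subset_Icc h12 le_rfl) p.1, p.2)) = ν₂ := by
  obtain ⟨γ, hγ, hfst, hsnd, hmatch_ae⟩ := exists_coupling_of_map_eq
    (measurable_eval_prodMk _) (measurable_eval_prodMk _) ν₁ ν₂ hmatch
  set glue := fun q : (C(Icc t1 t2, Torus d) × U) × (C(Icc t2 t3, Torus d) × U) =>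
    (concatPath h12 h23 q.1.1 q.2.1, q.1.2)
  have hglue : Measurable glue :=
    ((continuous_concatPath h12 h23).measurable.comp
      (measurable_fst.fst.prodMk measurable_snd.fst)).prodMk measurable_fst.snd
  refine ⟨γ.map glue, Measure.isProbabilityMeasure_map hglue.aemeasurable, ?_, ?_⟩
  · rw [Measure.map_map (measurable_restrMap_prodMk _) hglue, ← hfst]
    congr 1
    funext q
    exact Prod.ext (restrMap_concatPath_left _ _ _ _) rfl
  · rw [Measure.map_map (measurable_restrMap_prodMk _) hglue, ← hsnd]
    refine Measure.map_congr ?_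
    filter_upwards [hmatch_ae] with q hq
    obtain ⟨hx, hu⟩ := Prod.ext_iff.1 hq
    exact Prod.ext (restrMap_concatPath_right _ _ _ _ hx) hu

/-- Given `t¹ < t² < t³` and Borel probabilities `ν₁` on
`C([t¹,t²];𝕋^d) × U` and `ν₂` on `C([t²,t³];𝕋^d) × U` whose pushforwards under
`(x(·),u) ↦ (x(t²),u)` coincide, the concatenation `ν₁⊙ν₂` is a well-defined Borel
probability on `C([t¹,t³];𝕋^d) × U`: there is a probability `ν` whose restrictions to the
two subintervals push forward to `ν₁` and `ν₂`, and whose pushforward under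
`(x(·),u) ↦ (x(t),u)` equals that of `ν₁` for `t ∈ [t¹,t²]` and that of `ν₂` for
`t ∈ [t²,t³]`. -/
theorem stmt15 {d : ℕ} {U : Type*} [MetricSpace U] [CompactSpace U]
    [MeasurableSpace U] [BorelSpace U]
    (t1 t2 t3 : ℝ) (h12 : t1 < t2) (h23 : t2 < t3)
    (ν₁ : Measure (C(Set.Icc t1 t2, Torus d) × U)) [IsProbabilityMeasure ν₁]
    (ν₂ : Measure (C(Set.Icc t2 t3, Torus d) × U)) [IsProbabilityMeasure ν₂]
    (hmatch :
      ν₁.map (fun p => (p.1 ⟨t2, Set.right_mem_Icc.mpr h12.le⟩, p.2)) =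
      ν₂.map (fun p => (p.1 ⟨t2, Set.left_mem_Icc.mpr h23.le⟩, p.2))) :
    ∃ ν : Measure (C(Set.Icc t1 t3, Torus d) × U),
      IsProbabilityMeasure ν ∧
      ν.map (fun p => (restrMap (Set.Icc_subset_Icc le_rfl h23.le) p.1, p.2)) = ν₁ ∧
      ν.map (fun p => (restrMap (Set.Icc_subset_Icc h12.le le_rfl) p.1, p.2)) = ν₂ ∧
      (∀ t (ht : t ∈ Set.Icc t1 t2),
        ν.map (fun p => (p.1 ⟨t, Set.Icc_subset_Icc le_rfl h23.le ht⟩, p.2)) =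
          ν₁.map (fun p => (p.1 ⟨t, ht⟩, p.2))) ∧
      (∀ t (ht : t ∈ Set.Icc t2 t3),
        ν.map (fun p => (p.1 ⟨t, Set.Icc_subset_Icc h12.le le_rfl ht⟩, p.2)) =
          ν₂.map (fun p => (p.1 ⟨t, ht⟩, p.2))) := by
  obtain ⟨ν, hν, hν₁, hν₂⟩ := exists_concat_measure h12.le h23.le ν₁ ν₂ hmatch
  refine ⟨ν, hν, hν₁, hν₂, fun t ht => ?_, fun t ht => ?_⟩
  · rw [← hν₁, Measure.map_map (measurable_eval_prodMk ⟨t, ht⟩) (measurable_restrMap_prodMk _)]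
    rfl
  · rw [← hν₂, Measure.map_map (measurable_eval_prodMk ⟨t, ht⟩) (measurable_restrMap_prodMk _)]
    rfl
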